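/- arXiv:1709.00313 — 2 statements merged into one kernel-verified Lean document; each statement's English description precedes it below -/
import Mathlib

section
/- Let P = (X, ≺) be a finite poset, k a positive integer, and ε a real number with 0 < ε < 1/(2|X|). If P contains elements a_1 ≺ a_2 ≺ ⋯ ≺ a_{k+2} and an element x incomparable to every a_i (i.e., an induced (k+2)+1), then r_x → ℓ_{a_{k+2}} → r_{a_{k+1}} → ℓ_{a_{k+1}} → r_{a_k} → ℓ_{a_k} → ⋯ → r_{a_2} → ℓ_{a_2} → r_{a_1} → ℓ_x → r_x is a cycle in the weighted digraph G_{P,k} of total weight −(k+1)ε; in particular G_{P,k} contains a negative cycle. -/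
/-- A weighted digraph on vertex set `V`: an adjacency (arc) relation and a
real weight on each (potential) arc. -/
structure WeightedDigraph (V : Type*) where
  Adj : V → V → Prop
  w : V → V → ℝ

/-- A potential function: `p y - p x ≤ w x y` for every arc `(x, y)`. -/
def WeightedDigraph.IsPotential {V : Type*} (G : WeightedDigraph V) (p : V → ℝ) : Prop :=
  ∀ u v, G.Adj u v → p v - p u ≤ G.w u v

/-- Cyclic successor of an index. -/
def finNext {n : ℕ} (i : Fin n) : Fin n := ⟨(i + 1) % n, Nat.mod_lt _ i.pos⟩

/-- A cycle: a nonempty list of distinct vertices, with an arc from each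
vertex to the (cyclically) next one. -/
def WeightedDigraph.IsCycle {V : Type*} (G : WeightedDigraph V) (c : List V) : Prop :=
  c ≠ [] ∧ c.Nodup ∧ ∀ i : Fin c.length, G.Adj (c.get i) (c.get (finNext i))

/-- The weight of a cycle: the sum of its arc weights. -/
def WeightedDigraph.cycleWeight {V : Type*} (G : WeightedDigraph V) (c : List V) : ℝ :=
  ∑ i : Fin c.length, G.w (c.get i) (c.get (finNext i))

/-- `G` has a negative cycle. -/
def WeightedDigraph.HasNegCycle {V : Type*} (G : WeightedDigraph V) : Prop :=
  ∃ c : List V, G.IsCycle c ∧ G.cycleWeight c < 0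

/-- `x` and `y` are distinct and incomparable. -/
def Incomp {X : Type*} [PartialOrder X] (x y : X) : Prop :=
  x ≠ y ∧ ¬ x < y ∧ ¬ y < x

/-- The weighted digraph `G_{P,k}` associated to the finite poset `X` and the
parameters `k` and `ε`.  The left copy `Sum.inl x` plays the role of `ℓ_x`,
and the right copy `Sum.inr x` plays the role of `r_x`.  Arcs:
`(ℓ_y, r_x)` of weight `-ε` when `x ≺ y`; `(ℓ_x, r_x)` of weight `k`;
`(r_x, ℓ_y)` of weight `0` when `x, y` are distinct and incomparable;
`(r_x, ℓ_x)` of weight `-1`. -/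
def GPk (X : Type*) [PartialOrder X] [DecidableEq X] (k : ℕ) (ε : ℝ) :
    WeightedDigraph (X ⊕ X) where
  Adj u v :=
    match u, v with
    | .inl y, .inr x => x < y ∨ x = y
    | .inr x, .inl y => Incomp x y ∨ x = y
    | _, _ => False
  w u v :=
    match u, v with
    | .inl y, .inr x => if x = y then (k : ℝ) else -ε
    | .inr x, .inl y => if x = y then -1 else 0
    | _, _ => 0

/-- `L, R` give an interval representation of the poset `X`: each `x` gets the
closed interval `[L x, R x]`, and `x ≺ y` iff the interval of `x` lies
entirely to the left of the interval of `y`. -/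
def IsIntervalRep {X : Type*} [PartialOrder X] (L R : X → ℝ) : Prop :=
  (∀ x, L x ≤ R x) ∧ ∀ x y, x < y ↔ R x < L y

/-- The poset `X` has an interval representation with all lengths in `[1, k]`. -/
def HasIntervalRep1k (X : Type*) [PartialOrder X] (k : ℕ) : Prop :=
  ∃ L R : X → ℝ, IsIntervalRep L R ∧ ∀ x, 1 ≤ R x - L x ∧ R x - L x ≤ (k : ℝ)

/-- `X` contains an induced copy of `2 + 2`: elements `a, b, c, d` whose only
comparabilities are `a ≺ c` and `b ≺ d`. -/
def HasInduced22 (X : Type*) [PartialOrder X] : Prop :=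
  ∃ a b c d : X, a < c ∧ b < d ∧ Incomp a b ∧ Incomp a d ∧ Incomp b c ∧ Incomp c d

/-- `X` contains an induced copy of `n + 1`: a chain `a 0 ≺ a 1 ≺ ⋯ ≺ a (n-1)`
together with an element `x` incomparable to every element of the chain. -/
def HasInducedChainPlus1 (X : Type*) [PartialOrder X] (n : ℕ) : Prop :=
  ∃ (a : ℕ → X) (x : X), (∀ i j, i < j → j < n → a i < a j) ∧ ∀ i < n, Incomp x (a i)

/-- The cycle of `G_{P,k}` associated to an induced `(k+2)+1` consisting of the
chain `a 0 ≺ a 1 ≺ ⋯ ≺ a (k+1)` and the extra element `x`, namely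
`r_x → ℓ_{a (k+1)} → r_{a k} → ℓ_{a k} → ⋯ → r_{a 1} → ℓ_{a 1} → r_{a 0} → ℓ_x → r_x`. -/
def chainPlus1Cycle {X : Type*} (k : ℕ) (a : ℕ → X) (x : X) : List (X ⊕ X) :=
  Sum.inr x :: Sum.inl (a (k + 1)) ::
    ((((List.range k).reverse.map fun j => [Sum.inr (a (j + 1)), Sum.inl (a (j + 1))]).flatten)
      ++ [Sum.inr (a 0), Sum.inl x])

/-! Walking down the chain, the cycle alternates arcs `ℓ_{a (i+1)} → r_{a i}` of weight `-ε` with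
arcs `r_{a i} → ℓ_{a i}` of weight `-1`, and it is closed through `x` by two arcs of weight `0`
and the arc `ℓ_x → r_x` of weight `k`. The `k` arcs of weight `-1` cancel the arc of weight `k`
exactly, leaving the `k + 1` arcs of weight `-ε`. -/

namespace WeightedDigraph

variable {V : Type*} (G : WeightedDigraph V)

def walkWeight (l : List V) : ℝ := (List.zipWith G.w l l.tail).sum

@[simp]
lemma walkWeight_singleton (v : V) : G.walkWeight [v] = 0 := rfl

@[simp]
lemma walkWeight_cons_cons (u v : V) (l : List V) :
    G.walkWeight (u :: v :: l) = G.w u v + G.walkWeight (v :: l) := by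
  simp [walkWeight]

lemma getElem_finNext_cons (v : V) (l : List V) (i : Fin (v :: l).length) :
    (v :: l)[(finNext i : ℕ)] = (v :: l ++ [v])[(i : ℕ) + 1]'(by simpa using i.isLt) := by
  obtain ⟨i, hi⟩ := i
  simp only [List.length_cons] at hi
  rcases Nat.lt_or_ge i l.length with h | h
  · simp [finNext, Nat.mod_eq_of_lt (show i + 1 < l.length + 1 by omega),
      List.getElem_append_left h]
  · obtain rfl : i = l.length := by omega
    simp [finNext]

theorem isCycle_cons_iff (v : V) (l : List V) :
    G.IsCycle (v :: l) ↔ (v :: l).Nodup ∧ (v :: l ++ [v]).IsChain G.Adj := by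
  simp only [IsCycle, List.isChain_iff_getElem, List.get_eq_getElem, getElem_finNext_cons, ne_eq,
    reduceCtorEq, not_false_eq_true, true_and]
  refine and_congr_right fun _ => ?_
  simp only [Fin.forall_iff, List.length_append, List.length_cons]
  refine forall_congr' fun i => ⟨fun h hi => ?_, fun h hi => ?_⟩
  · rw [List.getElem_append_left (by simpa using hi)]
    exact h (by simpa using hi)
  · rw [← List.getElem_append_left (by simpa using hi)]
    exact h (by simpa using hi)

theorem cycleWeight_cons (v : V) (l : List V) :
    G.cycleWeight (v :: l) = G.walkWeight (v :: l ++ [v]) := by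
  rw [walkWeight, ← Fin.sum_univ_getElem]
  simp only [cycleWeight, List.get_eq_getElem, getElem_finNext_cons, List.getElem_zipWith]
  exact Fintype.sum_equiv (finCongr (by simp)) _ _ fun i => by
    simp only [finCongr_apply, Fin.val_cast, List.getElem_append_left i.isLt]
    rfl

end WeightedDigraph

theorem Incomp.symm {X : Type*} [PartialOrder X] {x y : X} (h : Incomp x y) : Incomp y x :=
  ⟨h.1.symm, h.2.2, h.2.1⟩

section ChainPlus1

variable {X : Type*}

def chainDescent (a : ℕ → X) : ℕ → List (X ⊕ X)
  | 0 => []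
  | n + 1 => .inr (a (n + 1)) :: .inl (a (n + 1)) :: chainDescent a n

lemma flatten_map_range_reverse_eq_chainDescent (a : ℕ → X) (n : ℕ) :
    ((List.range n).reverse.map fun j => [Sum.inr (a (j + 1)), Sum.inl (a (j + 1))]).flatten =
      chainDescent a n := by
  induction n with
  | zero => rfl
  | succ n ih =>
    simp only [List.range_succ, List.reverse_append, List.reverse_singleton,
      List.singleton_append, List.map_cons, List.flatten_cons, ih]
    rfl

lemma chainPlus1Cycle_eq (k : ℕ) (a : ℕ → X) (x : X) :
    chainPlus1Cycle k a x =
      .inr x :: .inl (a (k + 1)) :: (chainDescent a k ++ [.inr (a 0), .inl x]) := by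
  rw [chainPlus1Cycle, flatten_map_range_reverse_eq_chainDescent]

lemma mem_chainDescent {a : ℕ → X} {n : ℕ} {v : X ⊕ X} :
    v ∈ chainDescent a n ↔ ∃ i ∈ Set.Icc 1 n, v = .inr (a i) ∨ v = .inl (a i) := by
  induction n with
  | zero => simp [chainDescent]
  | succ n ih =>
    simp only [chainDescent, List.mem_cons, ih]
    constructor
    · rintro (rfl | rfl | ⟨i, hi, hv⟩)
      · exact ⟨n + 1, by simp, .inl rfl⟩
      · exact ⟨n + 1, by simp, .inr rfl⟩
      · exact ⟨i, ⟨hi.1, hi.2.trans n.le_succ⟩, hv⟩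
    · rintro ⟨i, hi, hv⟩
      rcases hi.2.lt_or_eq with hlt | rfl
      · exact .inr (.inr ⟨i, ⟨hi.1, Nat.le_of_lt_succ hlt⟩, hv⟩)
      · rcases hv with rfl | rfl <;> simp

lemma nodup_chainDescent {a : ℕ → X} {n : ℕ} (ha : Set.InjOn a (Set.Icc 1 n)) :
    (chainDescent a n).Nodup := by
  induction n with
  | zero => exact List.nodup_nil
  | succ n ih =>
    have hfresh : ∀ i ∈ Set.Icc 1 n, a (n + 1) ≠ a i := fun i hi h => by
      have := ha ⟨by omega, le_rfl⟩ ⟨hi.1, hi.2.trans n.le_succ⟩ h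
      exact absurd hi.2 (by omega)
    simp only [chainDescent, List.nodup_cons, List.mem_cons, mem_chainDescent]
    refine ⟨?_, ?_, ih (ha.mono (Set.Icc_subset_Icc le_rfl n.le_succ))⟩ <;>
      simpa [reduceCtorEq] using hfresh

lemma nodup_chainPlus1Cycle {k : ℕ} {a : ℕ → X} {x : X} (ha : Set.InjOn a (Set.Iio (k + 2)))
    (hx : ∀ i < k + 2, x ≠ a i) : (chainPlus1Cycle k a x).Nodup := by
  rw [chainPlus1Cycle_eq]
  have hne : ∀ i < k + 2, ∀ j < k + 2, i ≠ j → a i ≠ a j := fun i hi j hj hij h =>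
    hij (ha hi hj h)
  simp only [List.nodup_cons, List.mem_cons, reduceCtorEq, List.mem_append, mem_chainDescent,
    Set.mem_Icc, Sum.inr.injEq, or_false, List.not_mem_nil, or_self, false_or, not_or, not_exists,
    not_and, and_imp, Sum.inl.injEq, List.nodup_append, not_false_eq_true, List.nodup_nil, and_self,
    ne_eq, forall_eq_or_imp, forall_eq, forall_exists_index, Sum.forall, true_and, and_true]
  refine ⟨⟨fun i _ hi => hx i (by omega), hx 0 (by omega)⟩,
    ⟨fun i _ hi => hne _ (by omega) i (by omega) (by omega), fun h => hx _ (by omega) h.symm⟩,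
    nodup_chainDescent (ha.mono fun i hi => Set.mem_Iio.2 (by have := hi.2; omega)),
    fun _ i _ hi hb hb' => hx i (by omega) (hb'.symm.trans hb),
    fun _ i _ hi hb hb' => hne i (by omega) 0 (by omega) (by omega) (hb.symm.trans hb')⟩

variable [PartialOrder X] [DecidableEq X] {k : ℕ} {ε : ℝ}

@[simp]
lemma GPk_w_inl_inr (x y : X) : (GPk X k ε).w (.inl y) (.inr x) = if x = y then (k : ℝ) else -ε :=
  rfl

@[simp]
lemma GPk_w_inr_inl (x y : X) : (GPk X k ε).w (.inr x) (.inl y) = if x = y then -1 else 0 :=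
  rfl

lemma isChain_chainDescent {a : ℕ → X} {n : ℕ} (ha : ∀ i ≤ n, a i < a (i + 1))
    {t : List (X ⊕ X)} (ht : (.inr (a 0) :: t).IsChain (GPk X k ε).Adj) :
    (.inl (a (n + 1)) :: (chainDescent a n ++ .inr (a 0) :: t)).IsChain (GPk X k ε).Adj := by
  induction n with
  | zero => exact ht.cons_cons (.inl (ha 0 le_rfl))
  | succ n ih =>
    exact .cons_cons (.inl (ha (n + 1) le_rfl)) <| .cons_cons (.inr rfl) <|
      ih fun i hi => ha i (by omega)

lemma walkWeight_chainDescent {a : ℕ → X} {n : ℕ} (ha : ∀ i ≤ n, a i ≠ a (i + 1))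
    (t : List (X ⊕ X)) :
    (GPk X k ε).walkWeight (.inl (a (n + 1)) :: (chainDescent a n ++ .inr (a 0) :: t)) =
      (GPk X k ε).walkWeight (.inr (a 0) :: t) - (n + 1) * ε - n := by
  induction n with
  | zero =>
    simp only [chainDescent, List.nil_append, WeightedDigraph.walkWeight_cons_cons,
      GPk_w_inl_inr, ha 0 le_rfl, ↓reduceIte]
    ring
  | succ n ih =>
    simp only [chainDescent, List.cons_append, WeightedDigraph.walkWeight_cons_cons] at ih ⊢
    rw [ih fun i hi => ha i (by omega)]
    simp only [GPk_w_inl_inr, GPk_w_inr_inl, ha (n + 1) le_rfl, ↓reduceIte]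
    push_cast
    ring

theorem isCycle_chainPlus1Cycle {a : ℕ → X} {x : X} (ha : StrictMonoOn a (Set.Iio (k + 2)))
    (hx : ∀ i < k + 2, Incomp x (a i)) : (GPk X k ε).IsCycle (chainPlus1Cycle k a x) := by
  have hsucc : ∀ i ≤ k, a i < a (i + 1) := fun i hi =>
    ha (Set.mem_Iio.2 (by omega)) (Set.mem_Iio.2 (by omega)) i.lt_succ_self
  have hclose : [.inr (a 0), .inl x, .inr x].IsChain (GPk X k ε).Adj :=
    .cons_cons (.inl (hx 0 (by omega)).symm) (List.isChain_pair.2 (.inr rfl))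
  rw [chainPlus1Cycle_eq, WeightedDigraph.isCycle_cons_iff]
  refine ⟨?_, ?_⟩
  · rw [← chainPlus1Cycle_eq]
    exact nodup_chainPlus1Cycle ha.injOn fun i hi => (hx i hi).1
  · simp only [List.cons_append, List.append_assoc, List.nil_append]
    exact .cons_cons (.inl (hx (k + 1) (by omega))) (isChain_chainDescent hsucc hclose)

theorem cycleWeight_chainPlus1Cycle {a : ℕ → X} {x : X} (ha : ∀ i ≤ k, a i ≠ a (i + 1))
    (hx0 : x ≠ a 0) (hxk : x ≠ a (k + 1)) :
    (GPk X k ε).cycleWeight (chainPlus1Cycle k a x) = -((k + 1) * ε) := by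
  rw [chainPlus1Cycle_eq, WeightedDigraph.cycleWeight_cons]
  simp only [List.cons_append, List.append_assoc, List.nil_append,
    WeightedDigraph.walkWeight_cons_cons, walkWeight_chainDescent ha]
  simp [hxk, hx0.symm]

end ChainPlus1

theorem inducedChainPlus1_gives_negCycle_general
    {X : Type*} [PartialOrder X] [DecidableEq X] (k : ℕ)
    (ε : ℝ) (hε0 : 0 < ε)
    (a : ℕ → X) (x : X)
    (hchain : ∀ i j, i < j → j < k + 2 → a i < a j)
    (hx : ∀ i < k + 2, Incomp x (a i)) :
    (GPk X k ε).IsCycle (chainPlus1Cycle k a x) ∧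
      (GPk X k ε).cycleWeight (chainPlus1Cycle k a x) = -((k + 1 : ℝ) * ε) ∧
      (GPk X k ε).HasNegCycle := by
  have hmono : StrictMonoOn a (Set.Iio (k + 2)) := fun i _ j hj hij => hchain i j hij hj
  have hcycle : (GPk X k ε).IsCycle (chainPlus1Cycle k a x) := isCycle_chainPlus1Cycle hmono hx
  have hweight : (GPk X k ε).cycleWeight (chainPlus1Cycle k a x) = -((k + 1 : ℝ) * ε) :=
    cycleWeight_chainPlus1Cycle
      (fun i hi => (hmono (Set.mem_Iio.2 (by omega)) (Set.mem_Iio.2 (by omega)) i.lt_succ_self).ne)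
      (hx 0 (by omega)).1 (hx (k + 1) (by omega)).1
  exact ⟨hcycle, hweight, _, hcycle, hweight ▸ neg_neg_of_pos (by positivity)⟩

/-- An induced `(k+2)+1`, i.e. a chain `a 0 ≺ a 1 ≺ ⋯ ≺ a (k+1)` together with
an element `x` incomparable to every element of the chain, yields the cycle
`r_x → ℓ_{a (k+1)} → r_{a k} → ℓ_{a k} → ⋯ → r_{a 1} → ℓ_{a 1} → r_{a 0} → ℓ_x → r_x`
in `G_{P,k}`, of total weight `-(k+1)ε`; in particular `G_{P,k}` has a negative
cycle. -/
theorem inducedChainPlus1_gives_negCycle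
    {X : Type*} [Fintype X] [PartialOrder X] [DecidableEq X] (k : ℕ) (hk : 0 < k)
    (ε : ℝ) (hε0 : 0 < ε) (hε1 : ε < 1 / (2 * Fintype.card X))
    (a : ℕ → X) (x : X)
    (hchain : ∀ i j, i < j → j < k + 2 → a i < a j)
    (hx : ∀ i < k + 2, Incomp x (a i)) :
    (GPk X k ε).IsCycle (chainPlus1Cycle k a x) ∧
      (GPk X k ε).cycleWeight (chainPlus1Cycle k a x) = -((k + 1 : ℝ) * ε) ∧
      (GPk X k ε).HasNegCycle :=
  inducedChainPlus1_gives_negCycle_general k ε hε0 a x hchain hx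
end

section
/- Let P = (X, ≺) be a finite poset, k a positive integer, and ε a real number with 0 < ε < 1/(2|X|). If C is a negative cycle in the weighted digraph G_{P,k} having the minimum number of arcs among all negative cycles, then C contains at least two arcs of weight −ε, and the total weight of C is at most −2ε. -/
/-!
Write `K`, `E`, `B` for the numbers of arcs of weight `k`, `-ε`, `-1` on a cycle of `G_{P,k}`;
every other arc has weight `0`, so the cycle has weight `kK - εE - B`. The `-ε` arcs leave
distinct vertices `ℓ_y`, so `εE ≤ ε|X| < 1/2`, and a negative weight forces `kK ≤ B` by
integrality. Hence the weight is at most `-εE`, and it remains to show `E ≥ 2`. A negative cycle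
has at least three vertices, since the only 2-cycles `ℓ_x r_x` weigh `k - 1 ≥ 0`. If `B = 0` then
`K = 0`, so every left vertex of the cycle starts a `-ε` arc; as the cycle alternates between left
and right vertices, `E ≥ 2`. If `B > 0`, an arc `r_x → ℓ_x` is preceded by an arc `ℓ_y → r_x` and
followed by an arc `ℓ_x → r_z` with `y, z ≠ x` (vertices of a cycle are distinct), so both have
weight `-ε`, and they are different arcs because the cycle has length at least three.
-/

open Finset

theorem finNext_val {n : ℕ} (i : Fin n) :
    (finNext i : ℕ) = if i.1 + 1 = n then 0 else i.1 + 1 := by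
  split_ifs with h
  · simp [finNext, h]
  · exact Nat.mod_eq_of_lt (by omega)

theorem finNext_eq_finRotate {n : ℕ} (i : Fin n) : finNext i = finRotate n i := by
  have := i.neZero
  ext
  simp [finNext, Fin.val_add, Nat.add_mod]

theorem finNext_bijective {n : ℕ} : Function.Bijective (@finNext n) := by
  simpa only [funext finNext_eq_finRotate] using (finRotate n).bijective

theorem finNext_finNext_ne {n : ℕ} (hn : 3 ≤ n) (i : Fin n) : finNext (finNext i) ≠ i := by
  intro h
  have h' := congrArg Fin.val h
  have := i.2
  simp only [finNext_val] at h'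
  split_ifs at h' <;> omega

namespace WeightedDigraph

variable {V : Type*} (G : WeightedDigraph V)

noncomputable def arcsOfWeight (c : List V) (a : ℝ) : Finset (Fin c.length) :=
  {i | G.w (c.get i) (c.get (finNext i)) = a}

theorem cycleWeight_eq_sum_card_mul {c : List V} {S : Finset ℝ}
    (hS : ∀ i : Fin c.length, G.w (c.get i) (c.get (finNext i)) ∈ S) :
    G.cycleWeight c = ∑ a ∈ S, #(G.arcsOfWeight c a) * a := by
  rw [cycleWeight, ← sum_fiberwise_of_maps_to (fun i _ => hS i)]
  refine sum_congr rfl fun a _ => ?_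
  rw [sum_congr rfl fun i hi => (mem_filter.1 hi).2, sum_const, nsmul_eq_mul]
  rfl

theorem cycleWeight_pair (a b : V) : G.cycleWeight [a, b] = G.w a b + G.w b a := by
  simp [cycleWeight, Fin.sum_univ_two, finNext]

variable {G}

theorem IsCycle.get_injective {c : List V} (hc : G.IsCycle c) : Function.Injective c.get :=
  List.nodup_iff_injective_get.mp hc.2.1

theorem IsCycle.adj_self {a : V} (hc : G.IsCycle [a]) : G.Adj a a := by
  simpa [finNext] using hc.2.2 ⟨0, by simp⟩

theorem IsCycle.adj_pair {a b : V} (hc : G.IsCycle [a, b]) : G.Adj a b ∧ G.Adj b a :=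
  ⟨by simpa [finNext] using hc.2.2 ⟨0, by simp⟩, by simpa [finNext] using hc.2.2 ⟨1, by simp⟩⟩

end WeightedDigraph

namespace GPk

open WeightedDigraph

variable {X : Type*} [PartialOrder X] [DecidableEq X] {k : ℕ} {ε : ℝ}

theorem not_adj_self (u : X ⊕ X) : ¬ (GPk X k ε).Adj u u := by
  rcases u with x | x <;> simp [GPk, Incomp]

theorem w_add_w_of_adj {u v : X ⊕ X} (huv : (GPk X k ε).Adj u v) (hvu : (GPk X k ε).Adj v u) :
    (GPk X k ε).w u v + (GPk X k ε).w v u = k - 1 := by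
  rcases u with y | x <;> rcases v with z | z <;> simp only [GPk, Incomp] at huv hvu
  · obtain rfl : z = y := by tauto
    simp [GPk]
    ring
  · obtain rfl : x = z := by tauto
    simp [GPk]
    ring

theorem w_mem (u v : X ⊕ X) : (GPk X k ε).w u v ∈ ({(k : ℝ), -ε, -1, 0} : Finset ℝ) := by
  rcases u with y | x <;> rcases v with x | y <;> simp only [GPk] <;> try split_ifs
  all_goals simp

theorem w_inl_inr_of_ne {x y : X} (h : x ≠ y) : (GPk X k ε).w (.inl y) (.inr x) = -ε := by
  simp [GPk, h]

theorem w_eq_neg_eps_of_adj_inl {y : X} {v : X ⊕ X} (h : (GPk X k ε).Adj (.inl y) v)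
    (hv : v ≠ .inr y) : (GPk X k ε).w (.inl y) v = -ε := by
  rcases v with z | x
  · simp [GPk] at h
  · exact w_inl_inr_of_ne fun hxy => hv (by rw [hxy])

theorem w_eq_neg_eps_of_adj_inr {x : X} {u : X ⊕ X} (h : (GPk X k ε).Adj u (.inr x))
    (hu : u ≠ .inl x) : (GPk X k ε).w u (.inr x) = -ε := by
  rcases u with y | z
  · exact w_inl_inr_of_ne fun hxy => hu (by rw [hxy])
  · simp [GPk] at h

theorem exists_eq_inl_of_w_eq_neg_eps (hε0 : 0 < ε) (hε1 : ε < 1) {u v : X ⊕ X}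
    (h : (GPk X k ε).Adj u v) (hw : (GPk X k ε).w u v = -ε) : ∃ y, u = .inl y := by
  rcases u with y | x
  · exact ⟨y, rfl⟩
  · rcases v with y | z
    · simp only [GPk] at hw; split_ifs at hw <;> linarith
    · simp [GPk] at h

theorem exists_eq_of_w_eq_neg_one (hε1 : ε ≠ 1) {u v : X ⊕ X}
    (h : (GPk X k ε).Adj u v) (hw : (GPk X k ε).w u v = -1) : ∃ x, u = .inr x ∧ v = .inl x := by
  rcases u with y | x <;> rcases v with z | z <;> simp only [GPk] at h hw
  · split_ifs at hw
    · have : (0 : ℝ) ≤ k := k.cast_nonneg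
      linarith
    · exact absurd (neg_inj.1 hw) hε1
  · split_ifs at hw with hxz
    · exact ⟨x, rfl, by rw [hxz]⟩
    · norm_num at hw

theorem isLeft_of_adj {u v : X ⊕ X} (h : (GPk X k ε).Adj u v) (hu : ¬ u.isLeft) : v.isLeft := by
  rcases u with y | x <;> rcases v with z | z <;> simp_all [GPk]

variable {c : List (X ⊕ X)}

theorem three_le_length (hk : 0 < k) (hc : (GPk X k ε).IsCycle c)
    (hneg : (GPk X k ε).cycleWeight c < 0) : 3 ≤ c.length := by
  match c, hc with
  | [], hc => exact absurd rfl hc.1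
  | [a], hc => exact absurd hc.adj_self (not_adj_self a)
  | [a, b], hc =>
    obtain ⟨hab, hba⟩ := hc.adj_pair
    rw [cycleWeight_pair, w_add_w_of_adj hab hba] at hneg
    have : (1 : ℝ) ≤ k := by exact_mod_cast hk
    linarith
  | _ :: _ :: _ :: _, _ => simp

theorem cycleWeight_eq (hk : 0 < k) (hε0 : 0 < ε) (hε1 : ε < 1) (c : List (X ⊕ X)) :
    (GPk X k ε).cycleWeight c = k * #((GPk X k ε).arcsOfWeight c k)
      - ε * #((GPk X k ε).arcsOfWeight c (-ε)) - #((GPk X k ε).arcsOfWeight c (-1)) := by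
  have : (1 : ℝ) ≤ k := by exact_mod_cast hk
  rw [cycleWeight_eq_sum_card_mul _ fun _ => w_mem _ _, sum_insert, sum_insert, sum_insert,
    sum_singleton]
  · ring
  all_goals
    simp only [mem_insert, mem_singleton, not_or]
    repeat' constructor
    all_goals intro h; linarith

theorem card_arcsOfWeight_neg_eps_le [Fintype X] (hε0 : 0 < ε) (hε1 : ε < 1)
    (hc : (GPk X k ε).IsCycle c) :
    #((GPk X k ε).arcsOfWeight c (-ε)) ≤ Fintype.card X := by
  refine card_le_card_of_injOn (fun i => Sum.elim id id (c.get i)) (fun _ _ => mem_univ _) ?_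
  intro i hi j hj hij
  have adj := hc.2.2
  obtain ⟨y, hy⟩ := exists_eq_inl_of_w_eq_neg_eps hε0 hε1 (adj i) (mem_filter.1 hi).2
  obtain ⟨y', hy'⟩ := exists_eq_inl_of_w_eq_neg_eps hε0 hε1 (adj j) (mem_filter.1 hj).2
  simp only [hy, hy', Sum.elim_inl, id] at hij
  exact hc.get_injective (by rw [hy, hy', hij])

theorem mul_card_arcsOfWeight_le_card_arcsOfWeight_neg_one [Fintype X] (hk : 0 < k)
    (hε0 : 0 < ε) (hε1 : ε < 1) (hεX : ε * Fintype.card X < 1) (hc : (GPk X k ε).IsCycle c)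
    (hneg : (GPk X k ε).cycleWeight c < 0) :
    k * #((GPk X k ε).arcsOfWeight c k) ≤ #((GPk X k ε).arcsOfWeight c (-1)) := by
  have hE : ε * #((GPk X k ε).arcsOfWeight c (-ε)) ≤ ε * Fintype.card X := by
    gcongr
    exact_mod_cast card_arcsOfWeight_neg_eps_le hε0 hε1 hc
  rw [cycleWeight_eq hk hε0 hε1] at hneg
  have hlt : (k * #((GPk X k ε).arcsOfWeight c k) : ℝ) <
      #((GPk X k ε).arcsOfWeight c (-1)) + 1 := by
    linarith
  exact Nat.lt_succ_iff.1 (by exact_mod_cast hlt)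

theorem two_le_card_arcsOfWeight_neg_eps (hε1 : ε ≠ 1) (hc : (GPk X k ε).IsCycle c)
    (hn : 3 ≤ c.length) {b : Fin c.length} (hb : b ∈ (GPk X k ε).arcsOfWeight c (-1)) :
    2 ≤ #((GPk X k ε).arcsOfWeight c (-ε)) := by
  obtain ⟨x, hbx, hnx⟩ := exists_eq_of_w_eq_neg_one hε1 (hc.2.2 b) (mem_filter.1 hb).2
  obtain ⟨a, rfl⟩ := finNext_bijective.2 b
  have hne : a ≠ finNext (finNext a) := (finNext_finNext_ne hn a).symm
  have ha : a ∈ (GPk X k ε).arcsOfWeight c (-ε) := by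
    refine mem_filter.2 ⟨mem_univ _, ?_⟩
    have hadj := hc.2.2 a
    rw [hbx] at hadj ⊢
    exact w_eq_neg_eps_of_adj_inr hadj fun h => hne (hc.get_injective (by rw [h, hnx]))
  have ha' : finNext (finNext a) ∈ (GPk X k ε).arcsOfWeight c (-ε) := by
    refine mem_filter.2 ⟨mem_univ _, ?_⟩
    have hadj := hc.2.2 (finNext (finNext a))
    rw [hnx] at hadj ⊢
    refine w_eq_neg_eps_of_adj_inl hadj fun h => hne ?_
    exact (finNext_bijective.1 (hc.get_injective (by rw [h, hbx]))).symm
  exact one_lt_card.2 ⟨a, ha, _, ha', hne⟩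

theorem length_le_two_mul_card_arcsOfWeight_neg_eps (hc : (GPk X k ε).IsCycle c)
    (hK : (GPk X k ε).arcsOfWeight c k = ∅) :
    c.length ≤ 2 * #((GPk X k ε).arcsOfWeight c (-ε)) := by
  let L : Finset (Fin c.length) := {i | (c.get i).isLeft}
  have hL : L ⊆ (GPk X k ε).arcsOfWeight c (-ε) := by
    intro i hi
    obtain ⟨y, hy⟩ := Sum.isLeft_iff.1 (mem_filter.1 hi).2
    refine mem_filter.2 ⟨mem_univ _, ?_⟩
    have hadj := hc.2.2 i
    rw [hy] at hadj ⊢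
    refine w_eq_neg_eps_of_adj_inl hadj fun hv => ?_
    have hik : i ∈ (GPk X k ε).arcsOfWeight c k :=
      mem_filter.2 ⟨mem_univ _, by rw [hy, hv]; simp [GPk]⟩
    simp [hK] at hik
  have hLc : #Lᶜ ≤ #L := card_le_card_of_injOn finNext
    (fun i hi => by simpa [L] using isLeft_of_adj (hc.2.2 i) (by simpa [L] using hi))
    finNext_bijective.1.injOn
  have hsplit : #L + #Lᶜ = c.length := by rw [card_add_card_compl, Fintype.card_fin]
  have := card_le_card hL
  omega

end GPk

theorem minimal_negCycle_two_eps_arcs_general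
    {X : Type*} [Fintype X] [PartialOrder X] [DecidableEq X] (k : ℕ) (hk : 0 < k)
    (ε : ℝ) (hε0 : 0 < ε) (hε1 : ε < 1 / (2 * Fintype.card X))
    (c : List (X ⊕ X)) (hc : (GPk X k ε).IsCycle c)
    (hneg : (GPk X k ε).cycleWeight c < 0) :
    2 ≤ Nat.card {i : Fin c.length // (GPk X k ε).w (c.get i) (c.get (finNext i)) = -ε} ∧
      (GPk X k ε).cycleWeight c ≤ -(2 * ε) := by
  have hX : (1 : ℝ) ≤ Fintype.card X := by
    rcases (Fintype.card X).eq_zero_or_pos with h | h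
    · simp only [h, Nat.cast_zero, mul_zero, div_zero] at hε1
      linarith
    · exact_mod_cast h
  have hεX : ε * Fintype.card X < 1 / 2 := by
    rw [lt_div_iff₀ (by positivity)] at hε1
    linarith
  have hε_lt_one : ε < 1 := by nlinarith
  have hn := GPk.three_le_length hk hc hneg
  have hbase := GPk.mul_card_arcsOfWeight_le_card_arcsOfWeight_neg_one hk hε0 hε_lt_one
    (by linarith) hc hneg
  have hE : 2 ≤ #((GPk X k ε).arcsOfWeight c (-ε)) := by
    obtain hB | ⟨b, hb⟩ := ((GPk X k ε).arcsOfWeight c (-1)).eq_empty_or_nonempty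
    · have hK : (GPk X k ε).arcsOfWeight c k = ∅ := by
        simpa [hB, hk.ne'] using hbase
      have := GPk.length_le_two_mul_card_arcsOfWeight_neg_eps hc hK
      omega
    · exact GPk.two_le_card_arcsOfWeight_neg_eps hε_lt_one.ne hc hn hb
  refine ⟨by rwa [Nat.card_eq_fintype_card, Fintype.card_subtype], ?_⟩
  have hKB : (k * #((GPk X k ε).arcsOfWeight c k) : ℝ) ≤ #((GPk X k ε).arcsOfWeight c (-1)) := by
    exact_mod_cast hbase
  have h2E : 2 * ε ≤ ε * #((GPk X k ε).arcsOfWeight c (-ε)) := by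
    rw [mul_comm]
    gcongr
    exact_mod_cast hE
  rw [GPk.cycleWeight_eq hk hε0 hε_lt_one c]
  linarith

/-- A negative cycle of `G_{P,k}` with the minimum number of arcs contains at
least two arcs of weight `-ε`, and its total weight is at most `-2ε`. -/
theorem minimal_negCycle_two_eps_arcs
    {X : Type*} [Fintype X] [PartialOrder X] [DecidableEq X] (k : ℕ) (hk : 0 < k)
    (ε : ℝ) (hε0 : 0 < ε) (hε1 : ε < 1 / (2 * Fintype.card X))
    (c : List (X ⊕ X)) (hc : (GPk X k ε).IsCycle c)
    (hneg : (GPk X k ε).cycleWeight c < 0)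
    (hmin : ∀ c' : List (X ⊕ X), (GPk X k ε).IsCycle c' →
      (GPk X k ε).cycleWeight c' < 0 → c.length ≤ c'.length) :
    2 ≤ Nat.card {i : Fin c.length // (GPk X k ε).w (c.get i) (c.get (finNext i)) = -ε} ∧
      (GPk X k ε).cycleWeight c ≤ -(2 * ε) :=
  minimal_negCycle_two_eps_arcs_general k hk ε hε0 hε1 c hc hneg
end
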